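/- arXiv:2401.03484 — 4 statements merged into one kernel-verified Lean document; each statement's English description precedes it below -/
import Mathlib

section
/- For a chronological map f : T₁ → T₂ between game trees, if the induced map f̄ : Run(T₁) → Run(T₂) is surjective, then f is surjective. The converse fails: there exist game trees T₁, T₂ and a surjective chronological map f : T₁ → T₂ such that f̄ is not surjective. -/
open Classical

/-- A game tree over `M`: a set of finite sequences closed under truncation,
in which every element admits a one-step extension. -/
def IsGameTree {M : Type*} (T : Set (List M)) : Prop :=
  (∀ t ∈ T, ∀ k ≤ t.length, t.take k ∈ T) ∧ (∀ t ∈ T, ∃ x : M, t ++ [x] ∈ T)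

/-- The initial segment of length `n` of an infinite sequence. -/
def runPre {M : Type*} (R : ℕ → M) (n : ℕ) : List M := List.ofFn fun i : Fin n => R i.1

/-- The runs (branches) of a game tree. -/
def GameRun {M : Type*} (T : Set (List M)) : Set (ℕ → M) := {R | ∀ n : ℕ, runPre R n ∈ T}

/-- A chronological map between game trees: preserves length and truncation. -/
def IsChron {M N : Type*} (T₁ : Set (List M)) (T₂ : Set (List N))
    (f : List M → List N) : Prop :=
  (∀ t ∈ T₁, f t ∈ T₂) ∧ (∀ t ∈ T₁, (f t).length = t.length) ∧
    (∀ t ∈ T₁, ∀ k ≤ t.length, f (t.take k) = (f t).take k)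

/-!
If `f̄` is onto, a node `s` of `T₂` is hit by `f`: extend `s` step by step to a run `R'` of `T₂`
(possible since every node has a one-step extension), lift `R'` to a run `R` of `T₁`, and
`f` maps the initial segment of `R` of length `|s|` to `s`.

For the converse, `T₁` consists of the constant sequences and `f` sends `⟨k, …, k⟩` to `k` ones
followed by zeros. Every node `1ⁿ0ᵐ` of `T₂` is hit, but a run of `T₁` is constant, say `k`, so
its image switches to `0` at time `k`, and the run of all ones is not in the image of `f̄`.
-/

/-- `f̄ : Run(T₁) → Run(T₂)` is surjective. -/
def IsRunSurjective {M N : Type*} (T₁ : Set (List M)) (T₂ : Set (List N))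
    (f : List M → List N) : Prop :=
  ∀ R' ∈ GameRun T₂, ∃ R ∈ GameRun T₁, ∀ n : ℕ, runPre R' n = f (runPre R n)

section Runs

variable {α : Type*}

theorem runPre_succ (R : ℕ → α) (n : ℕ) : runPre R (n + 1) = runPre R n ++ [R n] :=
  List.ofFn_succ_last

theorem runPre_const (a : α) (n : ℕ) : runPre (fun _ => a) n = List.replicate n a :=
  List.ofFn_const n a

variable {u : ℕ → List α}

theorem length_eq_of_forall_exists_eq_append (hu : ∀ n, ∃ x, u (n + 1) = u n ++ [x]) (n : ℕ) :
    (u n).length = (u 0).length + n := by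
  induction n with
  | zero => rfl
  | succ n ih =>
    obtain ⟨x, hx⟩ := hu n
    rw [hx, List.length_append, ih, List.length_singleton, Nat.add_assoc]

theorem take_eq_take_of_forall_exists_eq_append (hu : ∀ n, ∃ x, u (n + 1) = u n ++ [x])
    {k n m : ℕ} (hk : k ≤ (u n).length) (hnm : n ≤ m) : (u m).take k = (u n).take k := by
  induction m, hnm using Nat.le_induction with
  | base => rfl
  | succ m hnm ih =>
    obtain ⟨x, hx⟩ := hu m
    have hkm : k ≤ (u m).length := by
      rw [length_eq_of_forall_exists_eq_append hu] at hk ⊢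
      omega
    rw [hx, List.take_append_of_le_length hkm, ih]

theorem exists_runPre_eq_take_of_forall_exists_eq_append
    (hu : ∀ n, ∃ x, u (n + 1) = u n ++ [x]) : ∃ R : ℕ → α, ∀ n, runPre R n = (u n).take n := by
  have hlen (k : ℕ) : k < (u (k + 1)).length := by
    rw [length_eq_of_forall_exists_eq_append hu]
    omega
  refine ⟨fun k => (u (k + 1))[k]'(hlen k), fun n => ?_⟩
  induction n with
  | zero => rfl
  | succ n ih =>
    have hn : n ≤ (u n).length := by
      rw [length_eq_of_forall_exists_eq_append hu]
      omega
    rw [runPre_succ, ih, List.take_add_one, List.getElem?_eq_getElem (hlen n),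
      take_eq_take_of_forall_exists_eq_append hu hn (Nat.le_succ n)]
    rfl

theorem IsGameTree.exists_mem_gameRun_runPre_eq {T : Set (List α)} (hT : IsGameTree T)
    {s : List α} (hs : s ∈ T) : ∃ R ∈ GameRun T, runPre R s.length = s := by
  choose next hnext using hT.2
  let extend : T → T := fun t => ⟨t ++ [next t t.2], hnext t t.2⟩
  let u : ℕ → List α := fun n => extend^[n] ⟨s, hs⟩
  have hu (n : ℕ) : ∃ x, u (n + 1) = u n ++ [x] :=
    ⟨_, congrArg Subtype.val (Function.iterate_succ_apply' extend n _)⟩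
  obtain ⟨R, hR⟩ := exists_runPre_eq_take_of_forall_exists_eq_append hu
  refine ⟨R, fun n => ?_, ?_⟩
  · rw [hR]
    refine hT.1 _ (extend^[n] ⟨s, hs⟩).2 n ?_
    rw [length_eq_of_forall_exists_eq_append hu]
    omega
  · rw [hR]
    exact (take_eq_take_of_forall_exists_eq_append hu (n := 0) le_rfl (Nat.zero_le _)).trans
      List.take_length

end Runs

theorem IsRunSurjective.surjOn {M N : Type*} {T₁ : Set (List M)} {T₂ : Set (List N)}
    {f : List M → List N} (h : IsRunSurjective T₁ T₂ f) (hT₂ : IsGameTree T₂) :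
    Set.SurjOn f T₁ T₂ := by
  intro s hs
  obtain ⟨R', hR', hR's⟩ := hT₂.exists_mem_gameRun_runPre_eq hs
  obtain ⟨R, hR, hRR'⟩ := h R' hR'
  exact ⟨runPre R s.length, hR s.length, by rw [← hRR', hR's]⟩

section Counterexample

def constLists (α : Type*) : Set (List α) := {l | ∃ n a, l = List.replicate n a}

def onesThenZeros : Set (List ℕ) := {l | ∃ a b, l = List.replicate a 1 ++ List.replicate b 0}

def switchAtHead (l : List ℕ) : List ℕ :=
  List.replicate (min l.length (l.headD 0)) 1 ++ List.replicate (l.length - l.headD 0) 0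

theorem isGameTree_constLists (α : Type*) : IsGameTree (constLists α) := by
  constructor
  · rintro t ⟨n, a, rfl⟩ m -
    exact ⟨min m n, a, List.take_replicate⟩
  · rintro t ⟨n, a, rfl⟩
    exact ⟨a, n + 1, a, (List.replicate_succ' ..).symm⟩

theorem eq_const_of_mem_gameRun_constLists {α : Type*} {R : ℕ → α}
    (hR : R ∈ GameRun (constLists α)) : R = fun _ => R 0 := by
  funext n
  obtain ⟨m, a, hm⟩ := hR (n + 1)
  have hmem (i : ℕ) (hi : i ≤ n) : R i = a :=
    (List.eq_replicate_iff.mp hm).2 _ (List.mem_ofFn.mpr ⟨⟨i, Nat.lt_succ_of_le hi⟩, rfl⟩)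
  rw [hmem n le_rfl, hmem 0 (Nat.zero_le n)]

theorem take_replicate_append_replicate {α : Type*} (x y : α) (a b m : ℕ) :
    (List.replicate a x ++ List.replicate b y).take m =
      List.replicate (min m a) x ++ List.replicate (min (m - a) b) y := by
  rw [List.take_append, List.take_replicate, List.take_replicate, List.length_replicate]

theorem isGameTree_onesThenZeros : IsGameTree onesThenZeros := by
  constructor
  · rintro t ⟨a, b, rfl⟩ m -
    exact ⟨_, _, take_replicate_append_replicate 1 0 a b m⟩
  · rintro t ⟨a, b, rfl⟩
    exact ⟨0, a, b + 1, by rw [List.append_assoc, ← List.replicate_succ']⟩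

theorem switchAtHead_replicate (n k : ℕ) :
    switchAtHead (List.replicate n k) = List.replicate (min n k) 1 ++ List.replicate (n - k) 0 := by
  cases n <;> simp [switchAtHead, List.replicate_succ]

theorem isChron_switchAtHead : IsChron (constLists ℕ) onesThenZeros switchAtHead := by
  refine ⟨?_, ?_, ?_⟩
  · rintro t ⟨n, k, rfl⟩
    exact ⟨min n k, n - k, switchAtHead_replicate n k⟩
  · rintro t ⟨n, k, rfl⟩
    simp only [switchAtHead_replicate, List.length_append, List.length_replicate]
    omega
  · rintro t ⟨n, k, rfl⟩ m -
    rw [List.take_replicate, switchAtHead_replicate, switchAtHead_replicate,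
      take_replicate_append_replicate]
    congr 2 <;> omega

theorem surjOn_switchAtHead : Set.SurjOn switchAtHead (constLists ℕ) onesThenZeros := by
  rintro s ⟨a, b, rfl⟩
  -- with no zeros, any constant `k ≥ a` works; otherwise the constant must be exactly `a`
  rcases Nat.eq_zero_or_pos b with rfl | hb
  · exact ⟨List.replicate a a, ⟨a, a, rfl⟩, by simp [switchAtHead_replicate]⟩
  · refine ⟨List.replicate (a + b) a, ⟨a + b, a, rfl⟩, ?_⟩
    rw [switchAtHead_replicate, Nat.min_eq_right (Nat.le_add_right a b), Nat.add_sub_cancel_left]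

theorem not_isRunSurjective_switchAtHead :
    ¬ IsRunSurjective (constLists ℕ) onesThenZeros switchAtHead := by
  intro h
  have hones : (fun _ => 1) ∈ GameRun onesThenZeros := fun n =>
    ⟨n, 0, by rw [runPre_const, List.replicate_zero, List.append_nil]⟩
  obtain ⟨R, hR, hRR'⟩ := h _ hones
  have hk := hRR' (R 0 + 1)
  rw [eq_const_of_mem_gameRun_constLists hR, runPre_const, runPre_const, switchAtHead_replicate,
    Nat.min_eq_right (Nat.le_succ _), Nat.add_sub_cancel_left, List.replicate_succ'] at hk
  simp at hk

end Counterexample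

theorem run_surjective_implies_tree_surjective_not_conversely :
    (∀ (M N : Type) (T₁ : Set (List M)) (T₂ : Set (List N)) (f : List M → List N),
        IsGameTree T₁ → IsGameTree T₂ → IsChron T₁ T₂ f →
        (∀ R' ∈ GameRun T₂, ∃ R ∈ GameRun T₁, ∀ n : ℕ, runPre R' n = f (runPre R n)) →
        ∀ s ∈ T₂, ∃ t ∈ T₁, f t = s) ∧
    (∃ (T₁ T₂ : Set (List ℕ)) (f : List ℕ → List ℕ),
        IsGameTree T₁ ∧ IsGameTree T₂ ∧ IsChron T₁ T₂ f ∧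
        (∀ s ∈ T₂, ∃ t ∈ T₁, f t = s) ∧
        ¬ (∀ R' ∈ GameRun T₂, ∃ R ∈ GameRun T₁,
            ∀ n : ℕ, runPre R' n = f (runPre R n))) :=
  ⟨fun _ _ _ _ _ _ hT₂ _ h => IsRunSurjective.surjOn h hT₂,
    constLists ℕ, onesThenZeros, switchAtHead, isGameTree_constLists ℕ, isGameTree_onesThenZeros,
    isChron_switchAtHead, surjOn_switchAtHead, not_isRunSurjective_switchAtHead⟩
end

section
/- Let f : T₁ → T₂ be a chronological map between game trees with T₁ non-empty. Then f is locally surjective if and only if for every t ∈ T₁ there exists a chronological map g : T₂ → T₁ with f ∘ g = id_{T₂} and t in the image of g. -/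
open Classical

/-- A chronological map is locally surjective if it is locally surjective at every
moment `t`: every one-step extension of `f t` in `T₂` is the image of a one-step
extension of `t` in `T₁` (and `T₂` is empty whenever `T₁` is). -/
def LocallySurjective {M N : Type*} (T₁ : Set (List M)) (T₂ : Set (List N))
    (f : List M → List N) : Prop :=
  (T₁ = ∅ → T₂ = ∅) ∧
    ∀ t ∈ T₁, ∀ y : N, f t ++ [y] ∈ T₂ →
      ∃ x : M, t ++ [x] ∈ T₁ ∧ f (t ++ [x]) = f t ++ [y]


/-!
Given `t ∈ T₁`, a section through `t` is built by recursion on the length of `s ∈ T₂`: as long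
as `s` is a prefix of `f t` it is sent to the corresponding prefix of `t`, and afterwards the
section is extended one move at a time, local surjectivity supplying a preimage of each new
move. Conversely, if `g` is a section with `g (f t) = t`, then `g (f t ++ [y])` is a one-step
extension of `t` mapped to `f t ++ [y]`.
-/

section GameTree

variable {M N : Type*} {T₁ : Set (List M)} {T₂ : Set (List N)}

theorem IsGameTree.dropLast_mem (h : IsGameTree T₁) {t : List M} (ht : t ∈ T₁) :
    t.dropLast ∈ T₁ := by
  rw [List.dropLast_eq_take]
  exact h.1 t ht _ (Nat.sub_le _ _)

namespace IsChron

variable {f : List M → List N}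

theorem map_dropLast (hf : IsChron T₁ T₂ f) {t : List M} (ht : t ∈ T₁) :
    f t.dropLast = (f t).dropLast := by
  rw [List.dropLast_eq_take, List.dropLast_eq_take, hf.2.2 t ht _ (Nat.sub_le _ _), hf.2.1 t ht]

theorem of_map_dropLast (h₁ : IsGameTree T₁) (hmem : ∀ t ∈ T₁, f t ∈ T₂)
    (hlen : ∀ t ∈ T₁, (f t).length = t.length)
    (hdrop : ∀ t ∈ T₁, f t.dropLast = (f t).dropLast) : IsChron T₁ T₂ f := by
  refine ⟨hmem, hlen, ?_⟩
  suffices ∀ n, ∀ t ∈ T₁, ∀ k, t.length = k + n → f (t.take k) = (f t).take k from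
    fun t ht k hk => this (t.length - k) t ht k (by omega)
  intro n
  induction n with
  | zero =>
    intro t ht k hk
    rw [List.take_of_length_le (by omega), List.take_of_length_le (by rw [hlen t ht]; omega)]
  | succ n ih =>
    intro t ht k hk
    have h := ih _ (h₁.dropLast_mem ht) k (by simp only [List.length_dropLast]; omega)
    rw [hdrop t ht, List.dropLast_eq_take, List.dropLast_eq_take, List.take_take,
      List.take_take, hlen t ht, Nat.min_eq_left (by omega)] at h
    exact h

end IsChron

section Lift

variable (T₁) (f : List M → List N)

-- The fallback `u` is never reached on `T₂` when `f` is locally surjective.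
noncomputable def liftStep (u : List M) (s : List N) : List M :=
  if h : ∃ x, u ++ [x] ∈ T₁ ∧ f (u ++ [x]) = s then u ++ [h.choose] else u

variable {T₁ f}

theorem liftStep_spec {u : List M} {s : List N} (h : ∃ x, u ++ [x] ∈ T₁ ∧ f (u ++ [x]) = s) :
    liftStep T₁ f u s ∈ T₁ ∧ f (liftStep T₁ f u s) = s ∧ (liftStep T₁ f u s).dropLast = u := by
  rw [liftStep, dif_pos h]
  exact ⟨h.choose_spec.1, h.choose_spec.2, List.dropLast_concat⟩

theorem LocallySurjective.exists_snoc (hLS : LocallySurjective T₁ T₂ f) {u : List M}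
    (hu : u ∈ T₁) {s : List N} (hs : s ∈ T₂) (hne : s ≠ []) (hfu : f u = s.dropLast) :
    ∃ x, u ++ [x] ∈ T₁ ∧ f (u ++ [x]) = s := by
  rw [← List.dropLast_append_getLast hne, ← hfu] at hs ⊢
  exact hLS.2 u hu _ hs

variable (T₁ f)

noncomputable def sectionThrough (t : List M) (s : List N) : List M :=
  if s <+: f t then t.take s.length
  else liftStep T₁ f (sectionThrough t s.dropLast) s
termination_by s.length
decreasing_by
  rename_i h
  have := List.length_pos_iff.mpr fun (hs : s = []) => h (hs ▸ List.nil_prefix)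
  simp only [List.length_dropLast]
  omega

variable {T₁ f} {t : List M} {s : List N}

theorem sectionThrough_of_prefix (h : s <+: f t) :
    sectionThrough T₁ f t s = t.take s.length := by
  rw [sectionThrough, if_pos h]

theorem sectionThrough_of_not_prefix (h : ¬s <+: f t) :
    sectionThrough T₁ f t s = liftStep T₁ f (sectionThrough T₁ f t s.dropLast) s := by
  rw [sectionThrough, if_neg h]

theorem sectionThrough_self (ht : (f t).length = t.length) : sectionThrough T₁ f t (f t) = t := by
  rw [sectionThrough_of_prefix (List.prefix_refl _), ht, List.take_length]

theorem sectionThrough_spec_of_prefix (h₁ : IsGameTree T₁) (hf : IsChron T₁ T₂ f)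
    (ht : t ∈ T₁) (h : s <+: f t) :
    sectionThrough T₁ f t s ∈ T₁ ∧ f (sectionThrough T₁ f t s) = s := by
  have hlen : s.length ≤ t.length := hf.2.1 t ht ▸ h.length_le
  rw [sectionThrough_of_prefix h]
  exact ⟨h₁.1 t ht _ hlen, by rw [hf.2.2 t ht _ hlen, ← List.prefix_iff_eq_take.mp h]⟩

variable (h₁ : IsGameTree T₁) (h₂ : IsGameTree T₂) (hf : IsChron T₁ T₂ f)
  (hLS : LocallySurjective T₁ T₂ f) (ht : t ∈ T₁)
include h₁ h₂ hf hLS ht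

theorem sectionThrough_spec (hs : s ∈ T₂) :
    sectionThrough T₁ f t s ∈ T₁ ∧ f (sectionThrough T₁ f t s) = s := by
  induction s using List.reverseRecOn with
  | nil => exact sectionThrough_spec_of_prefix h₁ hf ht List.nil_prefix
  | append_singleton l a ih =>
    by_cases hp : l ++ [a] <+: f t
    · exact sectionThrough_spec_of_prefix h₁ hf ht hp
    have hl : l ∈ T₂ := by simpa using h₂.dropLast_mem hs
    obtain ⟨hmem, hmap⟩ := ih hl
    rw [sectionThrough_of_not_prefix hp, List.dropLast_concat]
    exact (liftStep_spec (hLS.exists_snoc hmem hs (by simp) (by simpa using hmap))).imp_right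
      And.left

theorem sectionThrough_dropLast (hs : s ∈ T₂) :
    sectionThrough T₁ f t s.dropLast = (sectionThrough T₁ f t s).dropLast := by
  by_cases hp : s <+: f t
  · rw [sectionThrough_of_prefix hp, sectionThrough_of_prefix ((List.dropLast_prefix s).trans hp)]
    simp only [List.dropLast_eq_take, List.take_take, List.length_take]
    congr 1
    have := hf.2.1 t ht ▸ hp.length_le
    omega
  · have hne : s ≠ [] := fun h => hp (h ▸ List.nil_prefix)
    obtain ⟨hmem, hmap⟩ := sectionThrough_spec h₁ h₂ hf hLS ht (h₂.dropLast_mem hs)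
    rw [sectionThrough_of_not_prefix hp]
    exact (liftStep_spec (hLS.exists_snoc hmem hs hne hmap)).2.2.symm

theorem isChron_sectionThrough : IsChron T₂ T₁ (sectionThrough T₁ f t) := by
  refine .of_map_dropLast h₂ (fun s hs => (sectionThrough_spec h₁ h₂ hf hLS ht hs).1)
    (fun s hs => ?_) (fun s hs => sectionThrough_dropLast h₁ h₂ hf hLS ht hs)
  obtain ⟨hmem, hmap⟩ := sectionThrough_spec h₁ h₂ hf hLS ht hs
  rw [← hf.2.1 _ hmem, hmap]

end Lift

theorem exists_snoc_of_section {f : List M → List N} {g : List N → List M}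
    (hg : IsChron T₂ T₁ g) (hfg : ∀ s ∈ T₂, f (g s) = s) {s₀ : List N} (hs₀ : s₀ ∈ T₂)
    {t : List M} (hgs₀ : g s₀ = t) {y : N} (hy : f t ++ [y] ∈ T₂) :
    ∃ x, t ++ [x] ∈ T₁ ∧ f (t ++ [x]) = f t ++ [y] := by
  have hgft : g (f t) = t := by rw [← hgs₀, hfg s₀ hs₀]
  have hmem := hg.1 _ hy
  have hmap := hfg _ hy
  have hdrop := hg.map_dropLast hy
  have hne : g (f t ++ [y]) ≠ [] := by
    rw [← List.length_pos_iff, hg.2.1 _ hy]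
    simp
  rw [List.dropLast_concat, hgft] at hdrop
  generalize g (f t ++ [y]) = v at hmem hmap hdrop hne
  obtain ⟨u, x, rfl⟩ := (List.eq_nil_or_concat' v).resolve_left hne
  rw [List.dropLast_concat] at hdrop
  subst hdrop
  exact ⟨x, hmem, hmap⟩

end GameTree

theorem locallySurjective_iff_sections {M N : Type*} (T₁ : Set (List M)) (T₂ : Set (List N))
    (h₁ : IsGameTree T₁) (h₂ : IsGameTree T₂) (hne : T₁.Nonempty)
    (f : List M → List N) (hf : IsChron T₁ T₂ f) :
    LocallySurjective T₁ T₂ f ↔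
      ∀ t ∈ T₁, ∃ g : List N → List M, IsChron T₂ T₁ g ∧
        (∀ s ∈ T₂, f (g s) = s) ∧ (∃ s ∈ T₂, g s = t) := by
  constructor
  · intro hLS t ht
    exact ⟨sectionThrough T₁ f t, isChron_sectionThrough h₁ h₂ hf hLS ht,
      fun s hs => (sectionThrough_spec h₁ h₂ hf hLS ht hs).2,
      f t, hf.1 t ht, sectionThrough_self (hf.2.1 t ht)⟩
  · intro hsec
    refine ⟨fun h => absurd h hne.ne_empty, fun t ht y hy => ?_⟩
    obtain ⟨g, hg, hfg, s₀, hs₀, hgs₀⟩ := hsec t ht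
    exact exists_snoc_of_section hg hfg hs₀ hgs₀ hy
end

section
/- Let X be a topological space in which every closed set Y and point x ∉ Y can be separated by a continuous function into [0,1] (T_{3½}). For every ω-cover W of X there exists a set A of continuous functions X → [0,1] such that the constant-zero function lies in the pointwise closure of A, and such that {φ⁻¹((−1,1)) : φ ∈ A} is an ω-cover of X refining W (every member is contained in some member of W). -/
/-- A family of open sets is an ω-cover if every finite subset of the space
is contained in some member of the family. -/
def IsOmegaCover {X : Type*} [TopologicalSpace X] (U : Set (Set X)) : Prop :=
  (∀ u ∈ U, IsOpen u) ∧ ∀ F : Finset X, ∃ u ∈ U, (F : Set X) ⊆ u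

/-- A sequence of open sets is a γ-cover if every infinite subfamily is an ω-cover. -/
def IsGammaCover {X : Type*} [TopologicalSpace X] (U : ℕ → Set X) : Prop :=
  (∀ n, IsOpen (U n)) ∧
    ∀ S : Set ℕ, S.Infinite → IsOmegaCover {u : Set X | ∃ n ∈ S, u = U n}

theorem omega_cover_refined_by_function_preimages {X : Type*} [TopologicalSpace X]
    (hT : ∀ Y : Set X, IsClosed Y → ∀ x ∉ Y, ∃ f : X → ℝ, Continuous f ∧
        (∀ y, f y ∈ Set.Icc (0 : ℝ) 1) ∧ f x = 0 ∧ ∀ y ∈ Y, f y = 1)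
    (W : Set (Set X)) (hW : IsOmegaCover W) :
    ∃ A : Set (X → ℝ),
      (∀ φ ∈ A, Continuous φ ∧ ∀ x, φ x ∈ Set.Icc (0 : ℝ) 1) ∧
      (∀ F : Finset X, ∀ ε : ℝ, 0 < ε → ∃ φ ∈ A, ∀ x ∈ F, |φ x| < ε) ∧
      IsOmegaCover ((fun φ : X → ℝ => φ ⁻¹' Set.Ioo (-1 : ℝ) 1) '' A) ∧
      (∀ φ ∈ A, ∃ w ∈ W, φ ⁻¹' Set.Ioo (-1 : ℝ) 1 ⊆ w) := by
  classical
  -- For each finite F, build a function φ_F.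
  have key : ∀ F : Finset X, ∃ φ : X → ℝ,
      Continuous φ ∧ (∀ x, φ x ∈ Set.Icc (0 : ℝ) 1) ∧ (∀ x ∈ F, φ x = 0) ∧
      ∃ w ∈ W, φ ⁻¹' Set.Ioo (-1 : ℝ) 1 ⊆ w := by
    intro F
    obtain ⟨w, hwW, hFw⟩ := hW.2 F
    have hclosed : IsClosed wᶜ := (hW.1 w hwW).isClosed_compl
    have hsep : ∀ x : X, ∃ f : X → ℝ, Continuous f ∧ (∀ y, f y ∈ Set.Icc (0 : ℝ) 1) ∧
        (x ∈ F → f x = 0) ∧ (x ∈ F → ∀ y ∈ wᶜ, f y = 1) := by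
      intro x
      by_cases hx : x ∈ F
      · obtain ⟨f, hf1, hf2, hf3, hf4⟩ := hT wᶜ hclosed x (by
          simp only [Set.mem_compl_iff, not_not]; exact hFw hx)
        exact ⟨f, hf1, hf2, fun _ => hf3, fun _ => hf4⟩
      · exact ⟨fun _ => 0, continuous_const, fun _ => ⟨le_refl 0, zero_le_one⟩,
          fun h => absurd h hx, fun h => absurd h hx⟩
    choose f hfc hfI hf0 hf1 using hsep
    refine ⟨fun y => ∏ x ∈ F, f x y, ?_, ?_, ?_, w, hwW, ?_⟩
    · exact continuous_finset_prod _ fun x _ => hfc x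
    · intro y
      constructor
      · exact Finset.prod_nonneg fun x _ => (hfI x y).1
      · exact Finset.prod_le_one (fun x _ => (hfI x y).1) (fun x _ => (hfI x y).2)
    · intro x hx
      exact Finset.prod_eq_zero hx (hf0 x hx)
    · intro y hy
      by_contra hyw
      have : ∏ x ∈ F, f x y = 1 :=
        Finset.prod_eq_one fun x hx => hf1 x hx y hyw
      have h2 : (∏ x ∈ F, f x y) < 1 := hy.2
      rw [this] at h2
      exact lt_irrefl _ h2
  choose g hgc hgI hg0 hgw using key
  refine ⟨Set.range g, ?_, ?_, ⟨?_, ?_⟩, ?_⟩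
  · rintro φ ⟨F, rfl⟩; exact ⟨hgc F, hgI F⟩
  · intro F ε hε
    exact ⟨g F, ⟨F, rfl⟩, fun x hx => by rw [hg0 F x hx]; simpa using hε⟩
  · rintro u ⟨φ, ⟨F, rfl⟩, rfl⟩
    exact isOpen_Ioo.preimage (hgc F)
  · intro F
    refine ⟨g F ⁻¹' Set.Ioo (-1 : ℝ) 1, ⟨g F, ⟨F, rfl⟩, rfl⟩, ?_⟩
    intro x hx
    have h0 := hg0 F x hx
    simp only [Set.mem_preimage, Set.mem_Ioo, h0]
    norm_num
  · rintro φ ⟨F, rfl⟩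
    exact hgw F
end

section
/- Let T be a game tree, let ∗ be an element not among the moves of T, and define T⊥ = {t⌢⟨∗ : i<n⟩ : t ∈ T, n < ω}. Then T⊥ is a game tree, the inclusion i : T → T⊥ is an injective chronological map, and for every game tree S̃, every pruned subtree S ≤ S̃, and every chronological map f : S → T, the map f⊥ : S̃ → T⊥ defined by f⊥(s) = f(s↾n_s)⌢⟨∗ : i < |s| − n_s⟩, where n_s = max{n ≤ |s| : s↾n ∈ S}, is chronological, satisfies f⊥(s) = i(f(s)) for all s ∈ S, and satisfies S = f⊥⁻¹(i[T]). -/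
open Classical

/-- The tree `T⊥` obtained by extending the moments of `T` with a new move `star`. -/
def botTree {M : Type*} (T : Set (List M)) (star : M) : Set (List M) :=
  {l : List M | ∃ t ∈ T, ∃ n : ℕ, l = t ++ List.replicate n star}

open Classical in
/-- The extension `f⊥` of a partial chronological map `f : S → T` to all of `S̃`:
`f⊥ s = f (s↾n_s) ⌢ ⟨star : i < |s| − n_s⟩` where `n_s = max {n ≤ |s| : s↾n ∈ S}`. -/
noncomputable def botExt {P M : Type*} (S : Set (List P)) (f : List P → List M)
    (star : M) (s : List P) : List M :=
  f (s.take (Nat.findGreatest (fun n => s.take n ∈ S) s.length)) ++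
    List.replicate (s.length - Nat.findGreatest (fun n => s.take n ∈ S) s.length) star


namespace BotAux

open Classical

variable {P : Type*} (S : Set (List P))

open Classical in
noncomputable def nGr (s : List P) : ℕ :=
  Nat.findGreatest (fun n => s.take n ∈ S) s.length

lemma nil_mem (hS : IsGameTree S) (hne : S.Nonempty) : ([] : List P) ∈ S := by
  obtain ⟨s, hs⟩ := hne
  simpa using hS.1 s hs 0 (Nat.zero_le _)

lemma nGr_le (s : List P) : nGr S s ≤ s.length := Nat.findGreatest_le _

lemma take_nGr_mem (hS : IsGameTree S) (hne : S.Nonempty) (s : List P) :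
    s.take (nGr S s) ∈ S :=
  Nat.findGreatest_spec (P := fun n => s.take n ∈ S) (Nat.zero_le _)
    (by simpa using nil_mem S hS hne)

lemma take_mem_iff (hS : IsGameTree S) (hne : S.Nonempty) (s : List P) (n : ℕ)
    (hn : n ≤ s.length) : s.take n ∈ S ↔ n ≤ nGr S s := by
  constructor
  · intro h; exact Nat.le_findGreatest hn h
  · intro h
    have := hS.1 _ (take_nGr_mem S hS hne s) n
      (by simpa [List.length_take, Nat.le_min] using ⟨h, hn⟩)
    simpa [List.take_take, Nat.min_eq_left h] using this

lemma nGr_take (hS : IsGameTree S) (hne : S.Nonempty) (s : List P) (k : ℕ)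
    (hk : k ≤ s.length) : nGr S (s.take k) = min k (nGr S s) := by
  have hlen : (s.take k).length = k := by simp [List.length_take, Nat.min_eq_left hk]
  apply le_antisymm
  · have h1 : nGr S (s.take k) ≤ k := by simpa [hlen] using nGr_le S (s.take k)
    refine le_min h1 ?_
    have hmem := take_nGr_mem S hS hne (s.take k)
    rw [List.take_take, Nat.min_eq_left h1] at hmem
    exact (take_mem_iff S hS hne s _ (le_trans h1 hk)).1 hmem
  · have hmem : s.take (min k (nGr S s)) ∈ S :=
      (take_mem_iff S hS hne s _ (le_trans (min_le_left _ _) hk)).2 (min_le_right _ _)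
    have h2 : (s.take k).take (min k (nGr S s)) ∈ S := by
      rw [List.take_take, Nat.min_eq_left (min_le_left _ _)]; exact hmem
    exact Nat.le_findGreatest (by simp [hlen]) h2

lemma nGr_self (hS : IsGameTree S) (hne : S.Nonempty) (s : List P) (hs : s ∈ S) :
    nGr S s = s.length :=
  le_antisymm (nGr_le S s)
    ((take_mem_iff S hS hne s s.length le_rfl).1 (by simpa using hs))

end BotAux

theorem bot_weak_classifier {M P : Type*} (T : Set (List M)) (hT : IsGameTree T)
    (star : M) (hstar : ∀ t ∈ T, star ∉ t) :
    IsGameTree (botTree T star) ∧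
    IsChron T (botTree T star) id ∧ Set.InjOn id T ∧
    ∀ (S' S : Set (List P)), IsGameTree S' → IsGameTree S → S ⊆ S' → S.Nonempty →
      ∀ f : List P → List M, IsChron S T f →
        IsChron S' (botTree T star) (botExt S f star) ∧
        (∀ s ∈ S, botExt S f star s = id (f s)) ∧
        S = {s ∈ S' | botExt S f star s ∈ T} := by
  open BotAux in
  refine ⟨?_, ?_, ?_, ?_⟩
  · -- botTree is a game tree
    constructor
    · rintro l ⟨t, ht, n, rfl⟩ k hk
      rcases le_or_gt k t.length with h | h
      · exact ⟨t.take k, hT.1 t ht k h, 0, by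
          simp [List.take_append, Nat.sub_eq_zero_of_le h]⟩
      · refine ⟨t, ht, k - t.length, ?_⟩
        rw [List.take_append, List.take_of_length_le h.le,
          List.take_replicate]
        simp only [List.length_append, List.length_replicate] at hk
        congr 2
        omega
    · rintro l ⟨t, ht, n, rfl⟩
      exact ⟨star, t, ht, n + 1, by simp [List.replicate_succ', List.append_assoc]⟩
  · -- id is chronological
    exact ⟨fun t ht => ⟨t, ht, 0, by simp⟩, fun t _ => rfl, fun t _ k _ => rfl⟩
  · exact fun x _ y _ h => h
  · rintro S' S hS' hS hsub hne f ⟨hf1, hf2, hf3⟩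
    have hbot : ∀ s : List P, botExt S f star s =
        f (s.take (nGr S s)) ++ List.replicate (s.length - nGr S s) star :=
      fun s => rfl
    have hlen : ∀ s ∈ S', (botExt S f star s).length = s.length := by
      intro s hs
      rw [hbot]
      have h1 := hf2 _ (take_nGr_mem S hS hne s)
      have h2 := nGr_le S s
      simp only [List.length_append, List.length_replicate, h1, List.length_take]
      omega
    have hchronS' : IsChron S' (botTree T star) (botExt S f star) := by
      refine ⟨?_, hlen, ?_⟩
      · intro s hs
        exact ⟨_, hf1 _ (take_nGr_mem S hS hne s), _, hbot s⟩
      · intro s hs k hk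
        rw [hbot, hbot, nGr_take S hS hne s k hk]
        have hNle := nGr_le S s
        have hflen : (f (s.take (nGr S s))).length = nGr S s := by
          rw [hf2 _ (take_nGr_mem S hS hne s)]
          simp [List.length_take, Nat.min_eq_left hNle]
        rcases le_or_gt k (nGr S s) with h | h
        · have hftk : f (s.take k) = (f (s.take (nGr S s))).take k := by
            have := hf3 _ (take_nGr_mem S hS hne s) k
              (by simp [List.length_take]; omega)
            rwa [List.take_take, Nat.min_eq_left h] at this
          rw [Nat.min_eq_left h, List.take_take, Nat.min_self, hftk,
            List.take_append, hflen, Nat.sub_eq_zero_of_le h]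
          simp [List.length_take, Nat.min_eq_left hk]
        · have h4 : (f (s.take (nGr S s))).take k = f (s.take (nGr S s)) :=
            List.take_of_length_le (by rw [hflen]; omega)
          rw [Nat.min_eq_right h.le, List.take_take, Nat.min_eq_left h.le,
            List.take_append, hflen, h4, List.take_replicate]
          congr 2
          simp only [List.length_take]
          omega
    have heq : ∀ s ∈ S, botExt S f star s = f s := by
      intro s hs
      rw [hbot, nGr_self S hS hne s hs]
      simp
    refine ⟨hchronS', fun s hs => heq s hs, ?_⟩
    ext s
    simp only [Set.mem_setOf_eq]
    constructor
    · intro hs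
      exact ⟨hsub hs, by rw [heq s hs]; exact hf1 s hs⟩
    · rintro ⟨hs', hmem⟩
      have hNle := nGr_le S s
      rcases eq_or_lt_of_le hNle with h | h
      · have := take_nGr_mem S hS hne s
        rwa [h, List.take_length] at this
      · exfalso
        apply hstar _ hmem
        rw [hbot]
        refine List.mem_append_right _ ?_
        rw [List.mem_replicate]
        exact ⟨by omega, rfl⟩
end
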